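/- The equation 11α² − αβ − β² = δ has no solutions in half-integers α, β > 0 when δ = 1 and no solutions when δ = 0; it has solutions only when δ = −1. -/
import Mathlib


/- The equation 11α² − αβ − β² = δ in half-integers α, β > 0:
   no solutions for δ = 1, no solutions for δ = 0, solutions exist for δ = −1. -/
theorem stmt0 :
    (∀ α β : ℚ, (∃ a : ℤ, α = (a : ℚ) / 2) → (∃ b : ℤ, β = (b : ℚ) / 2) →
      0 < α → 0 < β → 11 * α ^ 2 - α * β - β ^ 2 ≠ 1) ∧
    (∀ α β : ℚ, (∃ a : ℤ, α = (a : ℚ) / 2) → (∃ b : ℤ, β = (b : ℚ) / 2) →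
      0 < α → 0 < β → 11 * α ^ 2 - α * β - β ^ 2 ≠ 0) ∧
    (∃ α β : ℚ, (∃ a : ℤ, α = (a : ℚ) / 2) ∧ (∃ b : ℤ, β = (b : ℚ) / 2) ∧
      0 < α ∧ 0 < β ∧ 11 * α ^ 2 - α * β - β ^ 2 = -1) := by
  refine ⟨?_, ?_, ?_⟩
  · rintro α β ⟨a, rfl⟩ ⟨b, rfl⟩ hα hβ heq
    have hZ : 11 * a ^ 2 - a * b - b ^ 2 = 4 := by
      have : ((11 * a ^ 2 - a * b - b ^ 2 : ℤ) : ℚ) = 4 := by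
        push_cast
        linear_combination 4 * heq
      exact_mod_cast this
    have h9 : ((11 * a ^ 2 - a * b - b ^ 2 : ℤ) : ZMod 9) = 4 := by
      rw [hZ]; norm_num
    push_cast at h9
    revert h9
    generalize (a : ZMod 9) = x
    generalize (b : ZMod 9) = y
    revert x y
    decide
  · rintro α β ⟨a, rfl⟩ ⟨b, rfl⟩ hα hβ heq
    have hne : ((a : ℚ) / 2) ≠ 0 := ne_of_gt hα
    have key : ((a : ℚ) / 2 + 2 * ((b : ℚ) / 2)) ^ 2 = 45 * ((a : ℚ) / 2) ^ 2 := by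
      linear_combination (-4 : ℚ) * heq
    have hsq : IsSquare (45 : ℚ) := by
      refine ⟨((a : ℚ) / 2 + 2 * ((b : ℚ) / 2)) / ((a : ℚ) / 2), ?_⟩
      rw [div_mul_div_comm, ← sq, ← sq, key, mul_div_assoc,
        div_self (pow_ne_zero 2 hne), mul_one]
    rw [show (45 : ℚ) = ((45 : ℕ) : ℚ) by norm_num, Rat.isSquare_natCast_iff] at hsq
    obtain ⟨r, hr⟩ := hsq
    have hr45 : r ≤ 45 := by nlinarith
    interval_cases r <;> omega
  · exact ⟨1, 3, ⟨2, by norm_num⟩, ⟨6, by norm_num⟩, by norm_num, by norm_num, by norm_num⟩
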